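/- Let K be a compact metrizable space and φ: K → K continuous. A nonempty closed set L ⊆ K is a center of attraction (i.e., for every open U ⊇ L and every x ∈ K, lim_{N→∞} (1/N)#{0 ≤ n < N : φ^n(x) ∈ U} = 1) if and only if every f ∈ C(K) vanishing on L satisfies ∫|f| dμ = 0 for all φ-invariant probability measures μ. -/

import Mathlib

/-!
If `L` attracts every orbit and `μ` is invariant, integrating the Birkhoff averages of `1_U`
(for open `U ⊇ L`) against `μ` gives `μ U = 1` by invariance and dominated convergence, so
`μ L = 1` by outer regularity and every `f` vanishing on `L` vanishes `μ`-a.e.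
Conversely, take an Urysohn function `f` equal to `0` on `L` and to `1` off `U`. Along any
ultrafilter the empirical measures of an orbit converge, by compactness of the space of
probability measures, to an invariant measure (Krylov–Bogolyubov), against which `f` integrates
to `0`; hence the Birkhoff averages of `f`, which dominate the frequency of visits to `Uᶜ`,
tend to `0`.
-/

open MeasureTheory Filter Topology Finset
open scoped ENNReal BoundedContinuousFunction

section BirkhoffAverage

variable {α : Type*}

theorem birkhoffAverage_indicator_one (f : α → α) (s : Set α) (n : ℕ) (x : α)
    [DecidablePred fun k => f^[k] x ∈ s] :
    birkhoffAverage ℝ f (s.indicator (1 : α → ℝ)) n x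
      = (#{k ∈ range n | f^[k] x ∈ s} : ℝ) / n := by
  simp [birkhoffAverage, birkhoffSum, Set.indicator_apply, Finset.sum_boole, div_eq_inv_mul]

theorem birkhoffAverage_mono {f : α → α} {g h : α → ℝ} (hgh : g ≤ h) (n : ℕ) (x : α) :
    birkhoffAverage ℝ f g n x ≤ birkhoffAverage ℝ f h n x := by
  simp only [birkhoffAverage, birkhoffSum, smul_eq_mul]
  gcongr with k
  exact hgh _

theorem abs_birkhoffAverage_le {f : α → α} {g : α → ℝ} {C : ℝ} (hg : ∀ x, |g x| ≤ C) (n : ℕ)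
    (x : α) : |birkhoffAverage ℝ f g n x| ≤ C := by
  rcases eq_or_ne n 0 with rfl | hn
  · simpa using (abs_nonneg _).trans (hg x)
  rw [birkhoffAverage, birkhoffSum, smul_eq_mul, abs_mul, abs_inv, Nat.abs_cast,
    inv_mul_le_iff₀ (by positivity)]
  calc |∑ k ∈ range n, g (f^[k] x)| ≤ ∑ k ∈ range n, |g (f^[k] x)| := abs_sum_le_sum_abs _ _
    _ ≤ ∑ k ∈ range n, C := sum_le_sum fun k _ => hg _
    _ = n * C := by simp

theorem tendsto_birkhoffAverage_indicator_one_of_le {f : α → α} {s : Set α} {g : α → ℝ}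
    (hsg : sᶜ.indicator 1 ≤ g) {x : α} (hg : Tendsto (birkhoffAverage ℝ f g · x) atTop (𝓝 0)) :
    Tendsto (birkhoffAverage ℝ f (s.indicator (1 : α → ℝ)) · x) atTop (𝓝 1) := by
  have hcompl : Tendsto (birkhoffAverage ℝ f (sᶜ.indicator (1 : α → ℝ)) · x) atTop (𝓝 0) := by
    refine squeeze_zero (fun n => ?_) (birkhoffAverage_mono hsg · x) hg
    simp only [birkhoffAverage, birkhoffSum, smul_eq_mul]
    exact mul_nonneg (by positivity) (sum_nonneg fun k _ => Set.indicator_nonneg (by simp) _)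
  have hsum : ∀ n ≠ 0, birkhoffAverage ℝ f (s.indicator 1) n x
      = 1 - birkhoffAverage ℝ f (sᶜ.indicator (1 : α → ℝ)) n x := fun n hn => by
    have h1 : birkhoffAverage ℝ f (1 : α → ℝ) n = 1 :=
      birkhoffAverage_of_comp_eq ℝ rfl (Nat.cast_ne_zero.2 hn)
    have hadd := congrFun (congrFun (birkhoffAverage_add (R := ℝ) (f := f)
      (g := s.indicator (1 : α → ℝ)) (g' := sᶜ.indicator 1)) n) x
    rw [Set.indicator_self_add_compl, h1] at hadd
    simp only [Pi.add_apply, Pi.one_apply] at hadd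
    linarith
  simpa using (tendsto_const_nhds.sub hcompl).congr'
    ((eventually_ne_atTop 0).mono fun n hn => (hsum n hn).symm)

end BirkhoffAverage

namespace MeasureTheory.MeasurePreserving

variable {α : Type*} [MeasurableSpace α] {μ : Measure α} {f : α → α}

theorem integral_birkhoffAverage (hf : MeasurePreserving f μ μ) {g : α → ℝ}
    (hg : Integrable g μ) {n : ℕ} (hn : n ≠ 0) :
    ∫ x, birkhoffAverage ℝ f g n x ∂μ = ∫ x, g x ∂μ := by
  have hcomp : ∀ k, ∫ x, g (f^[k] x) ∂μ = ∫ x, g x ∂μ := fun k => by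
    have := integral_map (hf.iterate k).measurable.aemeasurable
      (((hf.iterate k).map_eq).symm ▸ hg.aestronglyMeasurable)
    rwa [(hf.iterate k).map_eq, eq_comm] at this
  simp only [birkhoffAverage, birkhoffSum, smul_eq_mul]
  rw [integral_const_mul, integral_finsetSum (range n) (f := fun k y => g (f^[k] y)) fun k _ =>
    ((hf.iterate k).integrable_comp_of_integrable hg :)]
  simp [hcomp, hn]

theorem integral_eq_of_tendsto_birkhoffAverage [IsProbabilityMeasure μ]
    (hf : MeasurePreserving f μ μ) {g : α → ℝ} (hgm : Measurable g) {C : ℝ}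
    (hgC : ∀ x, |g x| ≤ C) {c : ℝ}
    (hlim : ∀ᵐ x ∂μ, Tendsto (birkhoffAverage ℝ f g · x) atTop (𝓝 c)) :
    ∫ x, g x ∂μ = c := by
  have hg : Integrable g μ := .of_bound hgm.aestronglyMeasurable C (ae_of_all _ hgC)
  have hmeas : ∀ n, Measurable fun x => birkhoffAverage ℝ f g n x := fun n => by
    simpa only [birkhoffAverage, birkhoffSum, smul_eq_mul, Function.comp_def] using
      (Finset.measurable_sum (range n) fun k _ => hgm.comp (hf.iterate k).measurable).const_mul _
  have hdom := tendsto_integral_of_dominated_convergence (fun _ => C)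
    (fun n => (hmeas n).aestronglyMeasurable) (integrable_const C)
    (fun n => ae_of_all _ (abs_birkhoffAverage_le hgC n)) hlim
  rw [integral_const, probReal_univ, one_smul] at hdom
  exact tendsto_nhds_unique (tendsto_const_nhds.congr' <| (eventually_ne_atTop 0).mono
    fun n hn => (hf.integral_birkhoffAverage hg hn).symm) hdom

theorem measure_eq_one_of_tendsto_birkhoffAverage_indicator [IsProbabilityMeasure μ]
    (hf : MeasurePreserving f μ μ) {s : Set α} (hs : MeasurableSet s)
    (hlim : ∀ x, Tendsto (birkhoffAverage ℝ f (s.indicator (1 : α → ℝ)) · x) atTop (𝓝 1)) :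
    μ s = 1 := by
  have := hf.integral_eq_of_tendsto_birkhoffAverage (measurable_one.indicator hs) (C := 1)
    (fun x => by by_cases hx : x ∈ s <;> simp [hx]) (ae_of_all _ hlim)
  rw [integral_indicator_one hs, measureReal_def, ENNReal.toReal_eq_one_iff] at this
  exact this

end MeasureTheory.MeasurePreserving

theorem MeasureTheory.measure_eq_one_of_forall_isOpen_superset {α : Type*} [MeasurableSpace α]
    [TopologicalSpace α] {μ : Measure α} [IsProbabilityMeasure μ] [μ.OuterRegular] {L : Set α}
    (h : ∀ U, IsOpen U → L ⊆ U → μ U = 1) : μ L = 1 := by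
  refine le_antisymm prob_le_one ?_
  rw [Set.measure_eq_iInf_isOpen]
  exact le_iInf₂ fun U hLU => le_iInf fun hU => (h U hU hLU).ge

section Empirical

variable {α : Type*} [MeasurableSpace α]

/-- Averages the Dirac masses at the first `n + 1` (not `n`) points of the orbit of `x`, so that
it is a probability measure for every `n`. -/
noncomputable def empiricalMeasure (f : α → α) (x : α) (n : ℕ) : ProbabilityMeasure α :=
  ⟨((n + 1 : ℕ) : ℝ≥0∞)⁻¹ • ∑ k ∈ range (n + 1), Measure.dirac (f^[k] x), ⟨by
    simp [ENNReal.inv_mul_cancel (by positivity : (n : ℝ≥0∞) + 1 ≠ 0) (by simp)]⟩⟩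

variable [TopologicalSpace α] [OpensMeasurableSpace α]

theorem integral_empiricalMeasure (f : α → α) (x : α) (n : ℕ) (g : α →ᵇ ℝ) :
    ∫ y, g y ∂(empiricalMeasure f x n : Measure α) = birkhoffAverage ℝ f g (n + 1) x := by
  rw [empiricalMeasure, ProbabilityMeasure.coe_mk, integral_smul_measure,
    integral_finsetSum_measure fun k _ => g.integrable _]
  simp [birkhoffAverage, birkhoffSum, integral_dirac' _ _ g.continuous.stronglyMeasurable,
    ENNReal.toReal_add]

theorem map_eq_of_tendsto_empiricalMeasure [HasOuterApproxClosed α] [BorelSpace α] {φ : α → α}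
    (hφ : Continuous φ) {x : α} {l : Filter ℕ} [l.NeBot] (hl : l ≤ atTop)
    {μ : ProbabilityMeasure α} (hμ : Tendsto (empiricalMeasure φ x) l (𝓝 μ)) :
    (μ : Measure α).map φ = μ := by
  refine ext_of_forall_integral_eq_of_IsFiniteMeasure fun g => ?_
  have hlim := ProbabilityMeasure.tendsto_iff_forall_integral_tendsto.1 hμ
  have hdiff : Tendsto (fun n => birkhoffAverage ℝ φ g (n + 1) (φ x)
      - birkhoffAverage ℝ φ g (n + 1) x) l (𝓝 0) :=
    ((tendsto_birkhoffAverage_apply_sub_birkhoffAverage' ℝ g.isBounded_range φ x).comp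
      (tendsto_add_atTop_nat 1)).mono_left hl
  set g' := g.compContinuous ⟨φ, hφ⟩
  have hshift : ∀ n, birkhoffAverage ℝ φ g n (φ x) = birkhoffAverage ℝ φ g' n x := by
    intro n
    simp only [birkhoffAverage, birkhoffSum, g', BoundedContinuousFunction.compContinuous_apply,
      ContinuousMap.coe_mk, ← Function.iterate_succ_apply, Function.iterate_succ_apply']
  simp only [hshift, ← integral_empiricalMeasure] at hdiff
  rw [integral_map hφ.aemeasurable g.continuous.aestronglyMeasurable]
  exact sub_eq_zero.1 (tendsto_nhds_unique ((hlim g').sub (hlim g)) hdiff)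

end Empirical

theorem tendsto_birkhoffAverage_of_forall_invariant {K : Type*} [TopologicalSpace K]
    [CompactSpace K] [T2Space K] [HasOuterApproxClosed K] [MeasurableSpace K] [BorelSpace K]
    {φ : K → K} (hφ : Continuous φ) (g : C(K, ℝ)) {c : ℝ}
    (hg : ∀ μ : Measure K, IsProbabilityMeasure μ → μ.map φ = μ → ∫ y, g y ∂μ = c) (x : K) :
    Tendsto (birkhoffAverage ℝ φ g · x) atTop (𝓝 c) := by
  rw [← tendsto_add_atTop_iff_nat 1, tendsto_iff_ultrafilter]
  intro 𝒰 h𝒰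
  set μ := (𝒰.map (empiricalMeasure φ x)).lim
  have hμ : Tendsto (empiricalMeasure φ x) 𝒰 (𝓝 μ) := Ultrafilter.le_nhds_lim _
  have hc := hg μ inferInstance (map_eq_of_tendsto_empiricalMeasure hφ h𝒰 hμ)
  have := ProbabilityMeasure.tendsto_iff_forall_integral_tendsto.1 hμ
    (BoundedContinuousFunction.mkOfCompact g)
  simp only [integral_empiricalMeasure] at this
  rw [← hc]
  exact this

open scoped Classical

theorem stmt13_general {K : Type} [TopologicalSpace K] [CompactSpace K]
    [TopologicalSpace.MetrizableSpace K] [MeasurableSpace K] [BorelSpace K]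
    (φ : K → K) (hφ : Continuous φ)
    (L : Set K) (hcl : IsClosed L) :
    (∀ U : Set K, IsOpen U → L ⊆ U → ∀ x : K,
        Tendsto
          (fun N : ℕ =>
            (((Finset.range N).filter (fun n => φ^[n] x ∈ U)).card : ℝ) / (N : ℝ))
          atTop (nhds (1 : ℝ))) ↔
      ∀ f : C(K, ℝ), (∀ x ∈ L, f x = 0) →
        ∀ μ : Measure K, IsProbabilityMeasure μ → μ.map φ = μ →
          ∫ x, |f x| ∂μ = 0 := by
  constructor
  · intro hattr f hfL μ hμ hinv
    have hφμ : MeasurePreserving φ μ μ := ⟨hφ.measurable, hinv⟩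
    have hL : μ L = 1 := measure_eq_one_of_forall_isOpen_superset fun U hU hLU =>
      hφμ.measure_eq_one_of_tendsto_birkhoffAverage_indicator hU.measurableSet fun x => by
        simpa only [birkhoffAverage_indicator_one] using hattr U hU hLU x
    refine integral_eq_zero_of_ae ?_
    filter_upwards [(mem_ae_iff_prob_eq_one hcl.measurableSet).2 hL] with y hy
    simp [hfL y hy]
  · intro hinv U hU hLU x
    obtain ⟨f, hfL, hfU, hf01⟩ := exists_continuous_zero_one_of_isClosed hcl hU.isClosed_compl
      (Set.disjoint_compl_right_iff_subset.2 hLU)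
    have hf : Tendsto (birkhoffAverage ℝ φ f · x) atTop (𝓝 0) :=
      tendsto_birkhoffAverage_of_forall_invariant hφ f (fun μ hμ hμφ => by
        simpa only [abs_of_nonneg (hf01 _).1] using hinv f hfL μ hμ hμφ) x
    have hUf : Uᶜ.indicator 1 ≤ ⇑f := fun y => by
      by_cases hy : y ∈ U
      · simpa [hy] using (hf01 y).1
      · simp [hy, hfU hy]
    simpa only [birkhoffAverage_indicator_one] using
      tendsto_birkhoffAverage_indicator_one_of_le hUf hf

/-- A nonempty closed `L ⊆ K` is a center of attraction of `(K, φ)` iff every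
`f ∈ C(K)` vanishing on `L` satisfies `∫ |f| dμ = 0` for all `φ`-invariant probability
measures `μ`. -/
theorem stmt13 {K : Type} [TopologicalSpace K] [CompactSpace K] [T2Space K]
    [TopologicalSpace.MetrizableSpace K] [MeasurableSpace K] [BorelSpace K]
    (φ : K → K) (hφ : Continuous φ)
    (L : Set K) (hne : L.Nonempty) (hcl : IsClosed L) :
    (∀ U : Set K, IsOpen U → L ⊆ U → ∀ x : K,
        Tendsto
          (fun N : ℕ =>
            (((Finset.range N).filter (fun n => φ^[n] x ∈ U)).card : ℝ) / (N : ℝ))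
          atTop (nhds (1 : ℝ))) ↔
      ∀ f : C(K, ℝ), (∀ x ∈ L, f x = 0) →
        ∀ μ : Measure K, IsProbabilityMeasure μ → μ.map φ = μ →
          ∫ x, |f x| ∂μ = 0 :=
  stmt13_general φ hφ L hcl
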